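/- Let s > 0 and ℓ ∈ ℕ with 2ℓ > s. There exists a constant C = C(ℓ,s,n) such that for every f ∈ Λ_s and every t > 0, ‖f - B_{ℓ,t} f‖_∞ ≤ C t^s ‖f‖_{Λ_s}, where B_{ℓ,t} is the 2ℓ-th order ball average operator. -/

import Mathlib

open MeasureTheory ENNReal

noncomputable section

/-- One symmetric difference step: `(Δ_h g)(x) = g(x + h/2) - g(x - h/2)`. -/
def sdOp {n : ℕ} (h : EuclideanSpace ℝ (Fin n)) (g : EuclideanSpace ℝ (Fin n) → ℝ) :
    EuclideanSpace ℝ (Fin n) → ℝ :=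
  fun x => g (x + (2 : ℝ)⁻¹ • h) - g (x - (2 : ℝ)⁻¹ • h)

/-- `k`-th order symmetric difference `Δ_h^k f`. -/
def sdiff {n : ℕ} (h : EuclideanSpace ℝ (Fin n)) (k : ℕ)
    (f : EuclideanSpace ℝ (Fin n) → ℝ) : EuclideanSpace ℝ (Fin n) → ℝ :=
  (sdOp h)^[k] f

/-- The ball average `B_t f(x) = ⨍_{B(0,1)} f(x + tz) dz`. -/
def ballAvg {n : ℕ} (t : ℝ) (f : EuclideanSpace ℝ (Fin n) → ℝ)
    (x : EuclideanSpace ℝ (Fin n)) : ℝ :=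
  ⨍ z in Metric.ball (0 : EuclideanSpace ℝ (Fin n)) 1, f (x + t • z)

/-- The `2ℓ`-th order ball average operator
`B_{ℓ,t} f = (-2/C(2ℓ,ℓ)) Σ_{j=1}^ℓ (-1)^j C(2ℓ,ℓ-j) B_{jt} f`. -/
def ballAvgOp {n : ℕ} (ℓ : ℕ) (t : ℝ) (f : EuclideanSpace ℝ (Fin n) → ℝ)
    (x : EuclideanSpace ℝ (Fin n)) : ℝ :=
  (-2 / (Nat.choose (2 * ℓ) ℓ : ℝ)) *
    ∑ j ∈ Finset.Icc 1 ℓ,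
      (-1 : ℝ) ^ j * (Nat.choose (2 * ℓ) (ℓ - j) : ℝ) * ballAvg ((j : ℝ) * t) f x

end

noncomputable section
/-- Membership in the inhomogeneous Lipschitz space `Λ_s`. -/
def MemLambda {n : ℕ} (s : ℝ) (f : EuclideanSpace ℝ (Fin n) → ℝ) : Prop :=
  Continuous f ∧ (∃ M : ℝ, ∀ x, |f x| ≤ M) ∧
    ∃ L : ℝ, ∀ (x h : EuclideanSpace ℝ (Fin n)), ‖h‖ ≤ 1 →
      |sdiff h (⌊s⌋₊ + 1) f x| ≤ L * ‖h‖ ^ s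

/-- The `Λ_s` norm, as an extended nonnegative real. -/
def LambdaNorm {n : ℕ} (s : ℝ) (f : EuclideanSpace ℝ (Fin n) → ℝ) : ℝ≥0∞ :=
  (⨆ x : EuclideanSpace ℝ (Fin n), ENNReal.ofReal |f x|) +
    ⨆ (h : {h : EuclideanSpace ℝ (Fin n) // 0 < ‖h‖ ∧ ‖h‖ ≤ 1})
      (x : EuclideanSpace ℝ (Fin n)),
        ENNReal.ofReal (‖h.1‖ ^ (-s) * |sdiff h.1 (⌊s⌋₊ + 1) f x|)
end

/-!
Expanding `Δ_h^{2ℓ} f(x) = Σ_k (-1)^k C(2ℓ,k) f(x + (k-ℓ)h)` and averaging over `h = tz` with `z`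
in the unit ball, the symmetry `z ↦ -z` of the ball pairs the terms `k = ℓ ± j`, which gives
`f - B_{ℓ,t} f = (-1)^ℓ / C(2ℓ,ℓ) · ⨍_{|z|<1} Δ_{tz}^{2ℓ} f(x) dz`.
Since `2ℓ ≥ ⌊s⌋ + 1`, for `‖h‖ ≤ 1` we get
`|Δ_h^{2ℓ} f| ≤ 2^{2ℓ-⌊s⌋-1} sup |Δ_h^{⌊s⌋+1} f| ≤ 2^{2ℓ} ‖h‖^s ‖f‖_{Λ_s}`, which handles `t ≤ 1`;
for `t > 1` the trivial bound `|Δ_h^{2ℓ} f| ≤ 2^{2ℓ} ‖f‖_∞ ≤ 2^{2ℓ} t^s ‖f‖_{Λ_s}` suffices.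
-/

open Finset

local notation "E" n => EuclideanSpace ℝ (Fin n)

theorem Finset.sum_range_two_mul_add_one {M : Type*} [AddCommMonoid M] (g : ℕ → M) (ℓ : ℕ) :
    ∑ k ∈ range (2 * ℓ + 1), g k = g ℓ + ∑ j ∈ Icc 1 ℓ, (g (ℓ - j) + g (ℓ + j)) := by
  rw [show 2 * ℓ + 1 = (ℓ + 1) + ℓ by ring, sum_range_add, sum_range_succ, ← sum_range_reflect,
    ← Finset.Ico_add_one_right_eq_Icc, sum_Ico_eq_sum_range, sum_add_distrib, Nat.add_sub_cancel,
    add_comm _ (g ℓ), add_assoc]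
  congr 2 <;> refine sum_congr rfl fun j hj => ?_ <;> congr 1 <;> omega

section FiniteDifferences

variable {n : ℕ}

theorem sdiff_add (h : E n) (a b : ℕ) (f : (E n) → ℝ) :
    sdiff h (a + b) f = sdiff h a (sdiff h b f) :=
  Function.iterate_add_apply _ _ _ _

theorem sdiff_zero_succ (k : ℕ) (f : (E n) → ℝ) : sdiff 0 (k + 1) f = 0 := by
  ext x
  simp [_root_.sdiff, Function.iterate_succ_apply', sdOp]

theorem abs_sdiff_le {g : (E n) → ℝ} {M : ℝ} (hg : ∀ y, |g y| ≤ M) (h : E n) (m : ℕ) (y : E n) :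
    |sdiff h m g y| ≤ 2 ^ m * M := by
  induction m generalizing y with
  | zero => simpa [_root_.sdiff] using hg y
  | succ m ih =>
    rw [_root_.sdiff, Function.iterate_succ_apply']
    calc |sdiff h m g (y + (2 : ℝ)⁻¹ • h) - sdiff h m g (y - (2 : ℝ)⁻¹ • h)|
        ≤ 2 ^ m * M + 2 ^ m * M := (abs_sub _ _).trans (add_le_add (ih _) (ih _))
      _ = 2 ^ (m + 1) * M := by ring

theorem sdiff_eq_fwdDiff (h : E n) (k : ℕ) (f : (E n) → ℝ) (x : E n) :
    sdiff h k f x = (fwdDiff h)^[k] f (x - ((k : ℝ) / 2) • h) := by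
  induction k generalizing x with
  | zero => simp [_root_.sdiff]
  | succ k ih =>
    rw [_root_.sdiff, Function.iterate_succ_apply', Function.iterate_succ_apply', ← _root_.sdiff,
      sdOp, ih, ih, fwdDiff]
    congr 1 <;> exact congrArg _ (by push_cast; module)

theorem sdiff_eq_sum (h : E n) (m : ℕ) (f : (E n) → ℝ) (x : E n) :
    sdiff h m f x = ∑ k ∈ range (m + 1),
      (-1 : ℝ) ^ (m - k) * m.choose k * f (x + ((k : ℝ) - m / 2) • h) := by
  rw [sdiff_eq_fwdDiff, fwdDiff_iter_eq_sum_shift]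
  refine sum_congr rfl fun k _ => ?_
  rw [← Nat.cast_smul_eq_nsmul ℝ k h, zsmul_eq_mul]
  push_cast
  congr 2
  module

theorem sdiff_two_mul_eq (h : E n) (ℓ : ℕ) (f : (E n) → ℝ) (x : E n) :
    sdiff h (2 * ℓ) f x = (-1) ^ ℓ * ((2 * ℓ).choose ℓ * f x + ∑ j ∈ Icc 1 ℓ,
      (-1) ^ j * (2 * ℓ).choose (ℓ - j) * (f (x + (j : ℝ) • h) + f (x - (j : ℝ) • h))) := by
  rw [sdiff_eq_sum, sum_range_two_mul_add_one, mul_add, mul_sum]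
  congr 1
  · rw [show 2 * ℓ - ℓ = ℓ by omega]
    push_cast
    rw [show (ℓ : ℝ) - 2 * ℓ / 2 = 0 by ring, zero_smul, add_zero, mul_assoc]
  · refine sum_congr rfl fun j hj => ?_
    obtain ⟨d, rfl⟩ : ∃ d, ℓ = j + d := ⟨ℓ - j, by have := (mem_Icc.mp hj).2; omega⟩
    have hsymm : (2 * (j + d)).choose (j + d + j) = (2 * (j + d)).choose d := by
      rw [← Nat.choose_symm (by omega)]
      congr 1
      omega
    rw [hsymm, show j + d - j = d by omega, show 2 * (j + d) - d = 2 * j + d by omega,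
      show 2 * (j + d) - (j + d + j) = d by omega]
    push_cast
    rw [show (d : ℝ) - 2 * (j + d) / 2 = -j by ring,
      show (j + d + j : ℝ) - 2 * (j + d) / 2 = j by ring, neg_smul, ← sub_eq_add_neg,
      pow_add _ (2 * j), pow_mul, neg_one_sq, one_pow, one_mul]
    have hsign : (-1 : ℝ) ^ (j + d) * (-1) ^ j = (-1) ^ d := by
      rw [← pow_add, show j + d + j = 2 * j + d by ring, pow_add, pow_mul, neg_one_sq, one_pow,
        one_mul]
    rw [← hsign]
    ring

end FiniteDifferences

namespace MeasureTheory

variable {α F : Type*} [MeasurableSpace α] {μ : Measure α} [NormedAddCommGroup F] [NormedSpace ℝ F]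

theorem average_add {f g : α → F} (hf : Integrable f μ) (hg : Integrable g μ) :
    ⨍ x, f x + g x ∂μ = ⨍ x, f x ∂μ + ⨍ x, g x ∂μ :=
  integral_add hf.to_average hg.to_average

theorem average_const_mul (c : ℝ) (f : α → ℝ) : ⨍ x, c * f x ∂μ = c * ⨍ x, f x ∂μ :=
  integral_const_mul c f

theorem average_finsetSum {ι : Type*} (s : Finset ι) {f : ι → α → F}
    (hf : ∀ i ∈ s, Integrable (f i) μ) : ⨍ x, ∑ i ∈ s, f i x ∂μ = ∑ i ∈ s, ⨍ x, f i x ∂μ :=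
  integral_finsetSum s fun i hi => (hf i hi).to_average

theorem norm_setAverage_le_of_norm_le_const {s : Set α} (hs₀ : μ s ≠ 0) (hs : μ s ≠ ∞)
    {f : α → F} {C : ℝ} (hC : ∀ x ∈ s, ‖f x‖ ≤ C) : ‖⨍ x in s, f x ∂μ‖ ≤ C := by
  have hpos : 0 < μ.real s := ENNReal.toReal_pos hs₀ hs
  rw [setAverage_eq, norm_smul, norm_inv, Real.norm_of_nonneg hpos.le, inv_mul_le_iff₀ hpos,
    mul_comm]
  exact norm_setIntegral_le_of_norm_le_const hs.lt_top hC

end MeasureTheory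

section BallAverage

variable {n : ℕ}

theorem integrableOn_ball_comp_add_smul {f : (E n) → ℝ} (hf : Continuous f) (x : E n) (c : ℝ) :
    IntegrableOn (fun z => f (x + c • z)) (Metric.ball 0 1) :=
  ((hf.comp (by fun_prop)).continuousOn.integrableOn_compact (isCompact_closedBall 0 1)).mono_set
    Metric.ball_subset_closedBall

theorem ballAvg_neg (c : ℝ) (f : (E n) → ℝ) (x : E n) : ballAvg (-c) f x = ballAvg c f x := by
  have hpreimage :=
    (Measure.measurePreserving_neg (volume : Measure (E n))).setIntegral_preimage_emb
      (Homeomorph.neg (E n)).measurableEmbedding (fun z => f (x + c • z)) (Metric.ball 0 1)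
  have hball : Neg.neg ⁻¹' Metric.ball (0 : E n) 1 = Metric.ball 0 1 := by
    ext z
    simp
  rw [hball] at hpreimage
  simp only [ballAvg, setAverage_eq, ← hpreimage, neg_smul, smul_neg]

theorem setAverage_sdiff_two_mul {f : (E n) → ℝ} (hf : Continuous f) (ℓ : ℕ) (t : ℝ) (x : E n) :
    ⨍ z in Metric.ball (0 : E n) 1, sdiff (t • z) (2 * ℓ) f x =
      (-1) ^ ℓ * ((2 * ℓ).choose ℓ * f x +
        2 * ∑ j ∈ Icc 1 ℓ, (-1) ^ j * (2 * ℓ).choose (ℓ - j) * ballAvg (j * t) f x) := by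
  have hint := integrableOn_ball_comp_add_smul hf x
  have hexp (z : E n) : sdiff (t • z) (2 * ℓ) f x = (-1) ^ ℓ * ((2 * ℓ).choose ℓ * f x +
      ∑ j ∈ Icc 1 ℓ, (-1) ^ j * (2 * ℓ).choose (ℓ - j) *
        (f (x + ((j : ℝ) * t) • z) + f (x + (-((j : ℝ) * t)) • z))) := by
    rw [sdiff_two_mul_eq]
    simp only [smul_smul, sub_eq_add_neg, neg_smul]
  have hpair (c : ℝ) :
      IntegrableOn (fun z => f (x + c • z) + f (x + (-c) • z)) (Metric.ball 0 1) :=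
    (hint c).add (hint (-c))
  have hconst : IntegrableOn (fun _ : E n => ((2 * ℓ).choose ℓ : ℝ) * f x) (Metric.ball 0 1) :=
    integrableOn_const measure_ball_lt_top.ne
  simp only [hexp]
  rw [average_const_mul, average_add hconst
      (integrable_finsetSum _ fun j _ => (hpair _).const_mul _),
    setAverage_const (Metric.measure_ball_pos volume 0 one_pos).ne' measure_ball_lt_top.ne,
    average_finsetSum _ fun j _ => (hpair _).const_mul _, mul_sum]
  congr 2
  refine sum_congr rfl fun j _ => ?_
  rw [average_const_mul, average_add (hint _) (hint _)]
  change _ * (ballAvg _ f x + ballAvg _ f x) = _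
  rw [ballAvg_neg]
  ring

theorem sub_ballAvgOp_eq {f : (E n) → ℝ} (hf : Continuous f) (ℓ : ℕ) (t : ℝ) (x : E n) :
    f x - ballAvgOp ℓ t f x =
      (-1) ^ ℓ / (2 * ℓ).choose ℓ * ⨍ z in Metric.ball (0 : E n) 1, sdiff (t • z) (2 * ℓ) f x := by
  have hC : ((2 * ℓ).choose ℓ : ℝ) ≠ 0 := Nat.cast_ne_zero.mpr (Nat.choose_pos (by omega)).ne'
  have hsq : (-1 : ℝ) ^ ℓ * (-1) ^ ℓ = 1 := by rw [← mul_pow, neg_one_mul, neg_neg, one_pow]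
  rw [setAverage_sdiff_two_mul hf, ballAvgOp, ← mul_assoc,
    div_mul_eq_mul_div ((-1 : ℝ) ^ ℓ), hsq, one_div, mul_add, ← mul_assoc, inv_mul_cancel₀ hC,
    one_mul]
  ring

end BallAverage

section LambdaNorm

variable {n : ℕ} {s : ℝ} {f : (E n) → ℝ}

theorem MemLambda.lambdaNorm_ne_top (hf : MemLambda s f) : LambdaNorm s f ≠ ⊤ := by
  obtain ⟨-, ⟨M, hM⟩, L, hL⟩ := hf
  refine ENNReal.add_ne_top.mpr ⟨ne_top_of_le_ne_top ofReal_ne_top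
    (iSup_le fun y => ofReal_le_ofReal (hM y)), ne_top_of_le_ne_top (ofReal_ne_top (r := L))
    (iSup₂_le fun h y => ofReal_le_ofReal ?_)⟩
  calc ‖h.1‖ ^ (-s) * |sdiff h.1 (⌊s⌋₊ + 1) f y| ≤ ‖h.1‖ ^ (-s) * (L * ‖h.1‖ ^ s) :=
        mul_le_mul_of_nonneg_left (hL y h.1 h.2.2) (by positivity)
    _ = L := by rw [mul_left_comm, ← Real.rpow_add h.2.1, neg_add_cancel, Real.rpow_zero, mul_one]

theorem abs_le_toReal_lambdaNorm (hf : LambdaNorm s f ≠ ⊤) (y : E n) :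
    |f y| ≤ (LambdaNorm s f).toReal := by
  rw [← ENNReal.ofReal_le_iff_le_toReal hf]
  exact (le_iSup (fun y => ENNReal.ofReal |f y|) y).trans le_self_add

theorem abs_sdiff_le_toReal_lambdaNorm (hs : 0 < s) (hf : LambdaNorm s f ≠ ⊤) {h : E n}
    (hh : ‖h‖ ≤ 1) (y : E n) :
    |sdiff h (⌊s⌋₊ + 1) f y| ≤ (LambdaNorm s f).toReal * ‖h‖ ^ s := by
  rcases (norm_nonneg h).eq_or_lt with h0 | h0
  · rw [← h0, Real.zero_rpow hs.ne', mul_zero, norm_eq_zero.mp h0.symm, sdiff_zero_succ,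
      Pi.zero_apply, abs_zero]
  have hmem : ENNReal.ofReal (‖h‖ ^ (-s) * |sdiff h (⌊s⌋₊ + 1) f y|) ≤ LambdaNorm s f :=
    (le_iSup₂_of_le (f := fun (h : {h : E n // 0 < ‖h‖ ∧ ‖h‖ ≤ 1}) y =>
      ENNReal.ofReal (‖h.1‖ ^ (-s) * |sdiff h.1 (⌊s⌋₊ + 1) f y|)) ⟨h, h0, hh⟩ y le_rfl).trans
      le_add_self
  rwa [ENNReal.ofReal_le_iff_le_toReal hf, Real.rpow_neg (norm_nonneg h),
    inv_mul_le_iff₀ (by positivity), mul_comm] at hmem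

theorem abs_sdiff_two_mul_le {ℓ : ℕ} (hs : 0 < s) (h2ℓ : s < 2 * ℓ) (hf : LambdaNorm s f ≠ ⊤)
    {t : ℝ} {h : E n} (hh : ‖h‖ ≤ t) (y : E n) :
    |sdiff h (2 * ℓ) f y| ≤ 2 ^ (2 * ℓ) * (LambdaNorm s f).toReal * t ^ s := by
  set N := (LambdaNorm s f).toReal
  rcases le_or_gt t 1 with ht1 | ht1
  · obtain ⟨m, hm⟩ : ∃ m, 2 * ℓ = m + (⌊s⌋₊ + 1) := by
      refine ⟨2 * ℓ - (⌊s⌋₊ + 1), (Nat.sub_add_cancel ?_).symm⟩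
      have : ⌊s⌋₊ < 2 * ℓ := (Nat.floor_lt hs.le).mpr (by exact_mod_cast h2ℓ)
      omega
    rw [hm, sdiff_add, mul_assoc]
    calc |sdiff h m (sdiff h (⌊s⌋₊ + 1) f) y| ≤ 2 ^ m * (N * ‖h‖ ^ s) :=
          abs_sdiff_le (abs_sdiff_le_toReal_lambdaNorm hs hf (hh.trans ht1)) h m y
      _ ≤ 2 ^ (m + (⌊s⌋₊ + 1)) * (N * t ^ s) := by
          gcongr
          · norm_num
          · omega
  · calc |sdiff h (2 * ℓ) f y| ≤ 2 ^ (2 * ℓ) * N := abs_sdiff_le (abs_le_toReal_lambdaNorm hf) h _ y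
      _ ≤ 2 ^ (2 * ℓ) * N * t ^ s :=
          le_mul_of_one_le_right (by positivity) (Real.one_le_rpow ht1.le hs.le)

theorem abs_sub_ballAvgOp_le {ℓ : ℕ} (hs : 0 < s) (h2ℓ : s < 2 * ℓ) (hf : MemLambda s f) {t : ℝ}
    (ht : 0 < t) (x : E n) :
    |f x - ballAvgOp ℓ t f x| ≤ 2 ^ (2 * ℓ) * (LambdaNorm s f).toReal * t ^ s := by
  have hC : (1 : ℝ) ≤ (2 * ℓ).choose ℓ := Nat.one_le_cast.mpr (Nat.choose_pos (by omega))
  have hsmall (z : E n) (hz : z ∈ Metric.ball 0 1) : ‖t • z‖ ≤ t := by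
    rw [norm_smul, Real.norm_of_nonneg ht.le]
    exact mul_le_of_le_one_right ht.le (mem_ball_zero_iff.mp hz).le
  rw [sub_ballAvgOp_eq hf.1, abs_mul, abs_div, abs_pow, abs_neg, abs_one, one_pow, Nat.abs_cast]
  refine (mul_le_of_le_one_left (abs_nonneg _) (div_le_one_of_le₀ hC (by positivity))).trans ?_
  exact norm_setAverage_le_of_norm_le_const (f := fun z => sdiff (t • z) (2 * ℓ) f x)
    (Metric.measure_ball_pos volume 0 one_pos).ne' measure_ball_lt_top.ne fun z hz =>
      abs_sdiff_two_mul_le hs h2ℓ hf.lambdaNorm_ne_top (hsmall z hz) x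

end LambdaNorm

theorem stmt18_general (n : ℕ) (s : ℝ) (hs : 0 < s)
    (ℓ : ℕ) (h2ℓ : s < 2 * ℓ) :
    ∃ C : ℝ, 0 < C ∧ ∀ f : EuclideanSpace ℝ (Fin n) → ℝ, MemLambda s f →
      ∀ t : ℝ, 0 < t → ∀ x : EuclideanSpace ℝ (Fin n),
        ENNReal.ofReal |f x - ballAvgOp ℓ t f x| ≤
          ENNReal.ofReal (C * t ^ s) * LambdaNorm s f := by
  refine ⟨2 ^ (2 * ℓ), by positivity, fun f hf t ht x => ?_⟩
  calc ENNReal.ofReal |f x - ballAvgOp ℓ t f x|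
      ≤ ENNReal.ofReal (2 ^ (2 * ℓ) * t ^ s * (LambdaNorm s f).toReal) := by
        refine ofReal_le_ofReal ((abs_sub_ballAvgOp_le hs h2ℓ hf ht x).trans_eq ?_)
        ring
    _ = ENNReal.ofReal (2 ^ (2 * ℓ) * t ^ s) * LambdaNorm s f := by
        rw [ENNReal.ofReal_mul (by positivity), ofReal_toReal hf.lambdaNorm_ne_top]

/-- for `2ℓ > s` there is `C = C(ℓ,s,n)` with
`‖f - B_{ℓ,t} f‖_∞ ≤ C t^s ‖f‖_{Λ_s}` for every `f ∈ Λ_s` and `t > 0`. -/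
theorem stmt18 (n : ℕ) (hn : 1 ≤ n) (s : ℝ) (hs : 0 < s)
    (ℓ : ℕ) (hℓ : 1 ≤ ℓ) (h2ℓ : s < 2 * ℓ) :
    ∃ C : ℝ, 0 < C ∧ ∀ f : EuclideanSpace ℝ (Fin n) → ℝ, MemLambda s f →
      ∀ t : ℝ, 0 < t → ∀ x : EuclideanSpace ℝ (Fin n),
        ENNReal.ofReal |f x - ballAvgOp ℓ t f x| ≤
          ENNReal.ofReal (C * t ^ s) * LambdaNorm s f :=
  stmt18_general n s hs ℓ h2ℓ
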